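/- Let w1, w2 be even integers ≥ 2. For P ∈ W_{w1,w2}^ℚ, the polynomial ((1,1)+(S,S))·P lies in the subspace W_{w1}^ℚ⊗E_{w2}^ℚ + E_{w1}^ℚ⊗W_{w2}^ℚ = {P1(X1)(1−X2^{w2}) + (1−X1^{w1})P2(X2) : P1 ∈ W_{w1}^ℚ, P2 ∈ W_{w2}^ℚ} if and only if P ∈ E_{w1,w2}^ℚ. Equivalently, the kernel of the map Φ_S : W_{w1,w2}^ℚ → (W_{w1}^ℚ/E_{w1}^ℚ) ⊗ (W_{w2}^ℚ/E_{w2}^ℚ), P ↦ class of ((1,1)+(S,S))·P, equals E_{w1,w2}^ℚ. -/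

import Mathlib

open MvPolynomial

/-- `SL(2, ℤ)`. -/
abbrev SL2Z := Matrix.SpecialLinearGroup (Fin 2) ℤ

/-- `S = [[0,-1],[1,0]]`. -/
def matS : SL2Z := ⟨!![0, -1; 1, 0], by norm_num [Matrix.det_fin_two_of]⟩

/-- `U = [[0,1],[-1,1]]`. -/
def matU : SL2Z := ⟨!![0, 1; -1, 1], by norm_num [Matrix.det_fin_two_of]⟩

/-- `T = [[1,1],[0,1]]`. -/
def matT : SL2Z := ⟨!![1, 1; 0, 1], by norm_num [Matrix.det_fin_two_of]⟩

/-- The weight-`w` action of `γ = [[a,b],[c,d]] ∈ SL(2,ℤ)` on a one-variable polynomial of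
degree ≤ w : `(γ·Q)(X) = (-cX+a)^w Q((dX-b)/(-cX+a))`, written coefficientwise. -/
noncomputable def polyAct1 {R : Type*} [CommRing R] (w : ℕ) (γ : SL2Z) (Q : Polynomial R) :
    Polynomial R :=
  ∑ m ∈ Finset.range (w + 1),
    Polynomial.C (Q.coeff m) *
      (Polynomial.C ((γ.1 1 1 : ℤ) : R) * Polynomial.X - Polynomial.C ((γ.1 0 1 : ℤ) : R)) ^ m *
      (Polynomial.C (-((γ.1 1 0 : ℤ) : R)) * Polynomial.X + Polynomial.C ((γ.1 0 0 : ℤ) : R)) ^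
        (w - m)

/-- `((dX-b)^m) * ((-cX+a)^n)` for `γ = [[a,b],[c,d]]`, in the variable `x`. -/
noncomputable def mfrac {R : Type*} [CommRing R] (γ : SL2Z) (x : MvPolynomial (Fin 2) R)
    (m n : ℕ) : MvPolynomial (Fin 2) R :=
  (MvPolynomial.C ((γ.1 1 1 : ℤ) : R) * x - MvPolynomial.C ((γ.1 0 1 : ℤ) : R)) ^ m *
    (MvPolynomial.C (-((γ.1 1 0 : ℤ) : R)) * x + MvPolynomial.C ((γ.1 0 0 : ℤ) : R)) ^ n

/-- The action of a pair `(γ1, γ2) ∈ SL(2,ℤ)²` on polynomials in `X1 = X 0`, `X2 = X 1` of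
degree ≤ w1 in `X1` and ≤ w2 in `X2`: the weight-`w1` action on `X1` via `γ1` and the
weight-`w2` action on `X2` via `γ2`. -/
noncomputable def polyAct2 {R : Type*} [CommRing R] (w1 w2 : ℕ) (γ1 γ2 : SL2Z)
    (P : MvPolynomial (Fin 2) R) : MvPolynomial (Fin 2) R :=
  ∑ m1 ∈ Finset.range (w1 + 1), ∑ m2 ∈ Finset.range (w2 + 1),
    MvPolynomial.C (MvPolynomial.coeff (Finsupp.single 0 m1 + Finsupp.single 1 m2) P) *
      mfrac γ1 (MvPolynomial.X 0) m1 (w1 - m1) * mfrac γ2 (MvPolynomial.X 1) m2 (w2 - m2)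

/-- Membership in `V_w^ℚ` : degree at most `w`. -/
def MemV1 (w : ℕ) (P : Polynomial ℚ) : Prop := P.natDegree ≤ w

/-- Membership in `W_w^ℚ = {P ∈ V_w^ℚ : (1+S)·P = 0, (1+U+U²)·P = 0}`. -/
def MemW1 (w : ℕ) (P : Polynomial ℚ) : Prop :=
  MemV1 w P ∧ P + polyAct1 w matS P = 0 ∧
    P + polyAct1 w matU P + polyAct1 w (matU ^ 2) P = 0

/-- Membership in `V_{w1,w2}^ℚ` : degree ≤ w1 in `X1 = X 0` and ≤ w2 in `X2 = X 1`. -/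
def MemV2 (w1 w2 : ℕ) (P : MvPolynomial (Fin 2) ℚ) : Prop :=
  MvPolynomial.degreeOf 0 P ≤ w1 ∧ MvPolynomial.degreeOf 1 P ≤ w2

/-- The embedding `P1(X) ↦ P1(X1)` of one-variable polynomials in the variable `X1 = X 0`. -/
noncomputable def toX1 (P1 : Polynomial ℚ) : MvPolynomial (Fin 2) ℚ :=
  Polynomial.aeval (MvPolynomial.X 0 : MvPolynomial (Fin 2) ℚ) P1


/-- The embedding `P2(X) ↦ P2(X2)` of one-variable polynomials in the variable `X2 = X 1`. -/
noncomputable def toX2 (P2 : Polynomial ℚ) : MvPolynomial (Fin 2) ℚ :=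
  Polynomial.aeval (MvPolynomial.X 1 : MvPolynomial (Fin 2) ℚ) P2

/-- Membership in `V_{w1,w2}^ℚ[I_D]` : lies in `V_{w1,w2}^ℚ` and is killed by
`(1,1)+(S,S)` and `(1,1)+(U,U)+(U²,U²)`. -/
def MemVID (w1 w2 : ℕ) (P : MvPolynomial (Fin 2) ℚ) : Prop :=
  MemV2 w1 w2 P ∧ P + polyAct2 w1 w2 matS matS P = 0 ∧
    P + polyAct2 w1 w2 matU matU P + polyAct2 w1 w2 (matU ^ 2) (matU ^ 2) P = 0

/-- Diagonal evaluation `P(X1,X2) ↦ P(Z,Z)`. -/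
noncomputable def diagEval (P : MvPolynomial (Fin 2) ℚ) : Polynomial ℚ :=
  MvPolynomial.aeval (fun _ : Fin 2 => (Polynomial.X : Polynomial ℚ)) P

/-- Membership in `W_{w1,w2}^ℚ` : lies in `V_{w1,w2}^ℚ` and is killed by the four Manin
relations of order 2 : `R1 = (1+S,1+S)`,
`R2 = (S,S)+(S,US)+(US,US)+(1,U)-(U²,U²)`, `R3 = (1+U+U²,1)((1,1)+(S,S))`,
`R4 = (1,1+U+U²)((1,1)+(S,S))`. -/
def MemW2 (w1 w2 : ℕ) (P : MvPolynomial (Fin 2) ℚ) : Prop :=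
  MemV2 w1 w2 P ∧
  P + polyAct2 w1 w2 matS 1 P + polyAct2 w1 w2 1 matS P + polyAct2 w1 w2 matS matS P = 0 ∧
  polyAct2 w1 w2 matS matS P + polyAct2 w1 w2 matS (matU * matS) P +
      polyAct2 w1 w2 (matU * matS) (matU * matS) P + polyAct2 w1 w2 1 matU P -
      polyAct2 w1 w2 (matU ^ 2) (matU ^ 2) P = 0 ∧
  P + polyAct2 w1 w2 matS matS P + polyAct2 w1 w2 matU 1 P +
      polyAct2 w1 w2 (matU * matS) matS P + polyAct2 w1 w2 (matU ^ 2) 1 P +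
      polyAct2 w1 w2 (matU ^ 2 * matS) matS P = 0 ∧
  P + polyAct2 w1 w2 matS matS P + polyAct2 w1 w2 1 matU P +
      polyAct2 w1 w2 matS (matU * matS) P + polyAct2 w1 w2 1 (matU ^ 2) P +
      polyAct2 w1 w2 matS (matU ^ 2 * matS) P = 0

/-- Membership in `W_{w1}^ℚ ⊗ 1 = {P1(X1) : P1 ∈ W_{w1}^ℚ}`. -/
def MemH (w1 : ℕ) (P : MvPolynomial (Fin 2) ℚ) : Prop :=
  ∃ P1 : Polynomial ℚ, MemW1 w1 P1 ∧ P = toX1 P1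

/-- Membership in `X1^{w1} ⊗ W_{w2}^ℚ = {X1^{w1}·P2(X2) : P2 ∈ W_{w2}^ℚ}`. -/
def MemVert (w1 w2 : ℕ) (P : MvPolynomial (Fin 2) ℚ) : Prop :=
  ∃ P2 : Polynomial ℚ, MemW1 w2 P2 ∧ P = MvPolynomial.X 0 ^ w1 * toX2 P2

/-- Membership in `E_{w1,w2}^ℚ = (W_{w1}^ℚ⊗1) + V_{w1,w2}^ℚ[I_D] + (X1^{w1}⊗W_{w2}^ℚ)`. -/
def MemE (w1 w2 : ℕ) (P : MvPolynomial (Fin 2) ℚ) : Prop :=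
  ∃ h d v : MvPolynomial (Fin 2) ℚ,
    MemH w1 h ∧ MemVID w1 w2 d ∧ MemVert w1 w2 v ∧ P = h + d + v

/-!
If `(1,1)+(S,S)` sends `P` to `P1(X1)(1 - X2^w2) + (1 - X1^w1)P2(X2)`, then
`d = P - P1(X1) + X1^w1 P2(X2)` is killed by `(1,1)+(S,S)`, because for `Q ∈ W_w` the pair
`(S,S)` sends `Q(X1)` to `-Q(X1) X2^w2` and `X1^w1 Q(X2)` to `-Q(X2)` (`w1`, `w2` even).
For such a `d` the relation `R2` collapses to `-((1,1)+(U,U)+(U²,U²))·d`, since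
`(S,US) = (1,U)(S,S)` and `(US,US) = (U,U)(S,S)`; as `R2` also kills `P1(X1)` and
`X1^w1 P2(X2)`, `d ∈ V[I_D]`. The converse is the same computation read backwards.

These identities rest on `polyAct2` being an action of `SL(2,ℤ)²`. On products `f(X1) g(X2)` it
acts factorwise, which reduces the action property to one variable, where `polyAct1 w γ Q` is the
degree-`w` homogenization of `Q` evaluated at `(dX - b, -cX + a)`.
-/

section Action

variable {R : Type*} [CommRing R]

/-- `(dX - b, -cX + a)` for `γ = [[a,b],[c,d]]`. -/
noncomputable def actSubst (γ : SL2Z) : Fin 2 → Polynomial R :=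
  ![Polynomial.C ((γ.1 1 1 : ℤ) : R) * Polynomial.X - Polynomial.C ((γ.1 0 1 : ℤ) : R),
    Polynomial.C (-((γ.1 1 0 : ℤ) : R)) * Polynomial.X + Polynomial.C ((γ.1 0 0 : ℤ) : R)]

/-- `(dx - by, -cx + ay)` for `γ = [[a,b],[c,d]]`. -/
noncomputable def actSubstHom (γ : SL2Z) : Fin 2 → MvPolynomial (Fin 2) R :=
  ![C ((γ.1 1 1 : ℤ) : R) * X 0 - C ((γ.1 0 1 : ℤ) : R) * X 1,
    C (-((γ.1 1 0 : ℤ) : R)) * X 0 + C ((γ.1 0 0 : ℤ) : R) * X 1]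

theorem polyAct1_eq_aeval_homogenize (w : ℕ) (γ : SL2Z) (Q : Polynomial R) :
    polyAct1 w γ Q = aeval (actSubst γ) (Q.homogenize w) := by
  rw [Polynomial.homogenize, Finset.Nat.sum_antidiagonal_eq_sum_range_succ_mk, map_sum, polyAct1]
  refine Finset.sum_congr rfl fun m _ => ?_
  simp [aeval_monomial, Finsupp.prod_fintype, actSubst, Polynomial.C_eq_algebraMap, mul_assoc]

theorem aeval_actSubst_actSubstHom (γ δ : SL2Z) :
    (fun i => aeval (actSubst (R := R) γ) (actSubstHom (R := R) δ i)) = actSubst (γ * δ) := by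
  funext i
  fin_cases i <;>
  · simp [actSubst, actSubstHom, Matrix.mul_apply, Fin.sum_univ_two]
    ring

theorem homogenize_aeval_actSubst (δ : SL2Z) {w : ℕ} {H : MvPolynomial (Fin 2) R}
    (hH : H.IsHomogeneous w) :
    (aeval (actSubst δ) H).homogenize w = bind₁ (actSubstHom δ) H := by
  apply Polynomial.homogenize_eq_of_isHomogeneous
  · have hlin (i : Fin 2) : (actSubstHom (R := R) δ i).IsHomogeneous 1 := by
      fin_cases i
      · exact (isHomogeneous_C_mul_X _ _).sub (isHomogeneous_C_mul_X _ _)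
      · exact (isHomogeneous_C_mul_X _ _).add (isHomogeneous_C_mul_X _ _)
    simpa using hH.aeval (actSubstHom δ) hlin
  · have hdehom : (fun i => aeval ![(Polynomial.X : Polynomial R), 1] (actSubstHom (R := R) δ i)) =
        actSubst δ := by
      funext i
      fin_cases i <;> simp [actSubst, actSubstHom]
    rw [aeval_bind₁, hdehom]

theorem polyAct1_polyAct1 (w : ℕ) (γ δ : SL2Z) (Q : Polynomial R) :
    polyAct1 w γ (polyAct1 w δ Q) = polyAct1 w (γ * δ) Q := by
  rw [polyAct1_eq_aeval_homogenize w γ, polyAct1_eq_aeval_homogenize w δ,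
    homogenize_aeval_actSubst δ Q.isHomogeneous_homogenize, aeval_bind₁,
    aeval_actSubst_actSubstHom, polyAct1_eq_aeval_homogenize]

theorem polyAct1_neg (w : ℕ) (γ : SL2Z) (Q : Polynomial R) :
    polyAct1 w γ (-Q) = -polyAct1 w γ Q := by
  simp [polyAct1_eq_aeval_homogenize]

theorem polyAct1_X_pow {w m : ℕ} (hm : m ≤ w) (γ : SL2Z) :
    polyAct1 w γ (Polynomial.X ^ m : Polynomial R) =
      actSubst (R := R) γ 0 ^ m * actSubst γ 1 ^ (w - m) := by
  simp [polyAct1_eq_aeval_homogenize, hm]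

theorem polyAct1_one_right (w : ℕ) (γ : SL2Z) :
    polyAct1 w γ (1 : Polynomial R) = actSubst γ 1 ^ w := by
  simpa using polyAct1_X_pow (R := R) (Nat.zero_le w) γ

theorem polyAct1_X_pow_self (w : ℕ) (γ : SL2Z) :
    polyAct1 w γ (Polynomial.X ^ w : Polynomial R) = actSubst γ 0 ^ w := by
  simpa using polyAct1_X_pow (R := R) le_rfl γ

noncomputable def polyAct2ₗ (w1 w2 : ℕ) (γ1 γ2 : SL2Z) :
    MvPolynomial (Fin 2) R →ₗ[R] MvPolynomial (Fin 2) R where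
  toFun := polyAct2 w1 w2 γ1 γ2
  map_add' P Q := by simp only [polyAct2, coeff_add, map_add, add_mul, Finset.sum_add_distrib]
  map_smul' c P := by
    simp only [polyAct2, smul_eq_C_mul, coeff_C_mul, map_mul, Finset.mul_sum, RingHom.id_apply,
      mul_assoc]

@[simp]
theorem polyAct2ₗ_apply (w1 w2 : ℕ) (γ1 γ2 : SL2Z) (P : MvPolynomial (Fin 2) R) :
    polyAct2ₗ w1 w2 γ1 γ2 P = polyAct2 w1 w2 γ1 γ2 P :=
  rfl

theorem polyAct2_add (w1 w2 : ℕ) (γ1 γ2 : SL2Z) (P Q : MvPolynomial (Fin 2) R) :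
    polyAct2 w1 w2 γ1 γ2 (P + Q) = polyAct2 w1 w2 γ1 γ2 P + polyAct2 w1 w2 γ1 γ2 Q :=
  (polyAct2ₗ w1 w2 γ1 γ2).map_add P Q

theorem polyAct2_sub (w1 w2 : ℕ) (γ1 γ2 : SL2Z) (P Q : MvPolynomial (Fin 2) R) :
    polyAct2 w1 w2 γ1 γ2 (P - Q) = polyAct2 w1 w2 γ1 γ2 P - polyAct2 w1 w2 γ1 γ2 Q :=
  (polyAct2ₗ w1 w2 γ1 γ2).map_sub P Q

theorem polyAct2_neg (w1 w2 : ℕ) (γ1 γ2 : SL2Z) (P : MvPolynomial (Fin 2) R) :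
    polyAct2 w1 w2 γ1 γ2 (-P) = -polyAct2 w1 w2 γ1 γ2 P :=
  (polyAct2ₗ w1 w2 γ1 γ2).map_neg P

theorem coeff_aeval_X_zero_mul_aeval_X_one (f g : Polynomial R) (u : Fin 2 →₀ ℕ) :
    coeff u (Polynomial.aeval (X 0) f * Polynomial.aeval (X 1) g) =
      f.coeff (u 0) * g.coeff (u 1) := by
  induction f using Polynomial.induction_on' with
  | add f f' hf hf' => rw [map_add, add_mul, coeff_add, hf, hf', Polynomial.coeff_add, add_mul]
  | monomial i a =>
    induction g using Polynomial.induction_on' with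
    | add g g' hg hg' => rw [map_add, mul_add, coeff_add, hg, hg', Polynomial.coeff_add, mul_add]
    | monomial j b =>
      have hu : Finsupp.single 0 i + Finsupp.single 1 j = u ↔ i = u 0 ∧ j = u 1 := by
        constructor
        · rintro rfl
          simp
        · rintro ⟨rfl, rfl⟩
          ext k
          fin_cases k <;> simp
      simp only [Polynomial.aeval_monomial, algebraMap_eq, X_pow_eq_monomial, C_mul_monomial,
        monomial_mul, coeff_monomial, Polynomial.coeff_monomial, mul_one, hu]
      split_ifs <;> simp_all

theorem aeval_X_polyAct1 (w : ℕ) (γ : SL2Z) (i : Fin 2) (Q : Polynomial R) :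
    Polynomial.aeval (X i) (polyAct1 w γ Q) =
      ∑ m ∈ Finset.range (w + 1), C (Q.coeff m) * mfrac γ (X i) m (w - m) := by
  simp only [polyAct1, mfrac, map_sum, map_mul, map_pow, map_sub, map_add, Polynomial.aeval_C,
    Polynomial.aeval_X, algebraMap_eq, mul_assoc]

theorem polyAct2_aeval_X_zero_mul_aeval_X_one (w1 w2 : ℕ) (γ1 γ2 : SL2Z) (f g : Polynomial R) :
    polyAct2 w1 w2 γ1 γ2
        (Polynomial.aeval (X 0 : MvPolynomial (Fin 2) R) f * Polynomial.aeval (X 1) g) =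
      Polynomial.aeval (X 0) (polyAct1 w1 γ1 f) * Polynomial.aeval (X 1) (polyAct1 w2 γ2 g) := by
  simp only [polyAct2, coeff_aeval_X_zero_mul_aeval_X_one, aeval_X_polyAct1, Finset.sum_mul_sum]
  refine Finset.sum_congr rfl fun m1 _ => Finset.sum_congr rfl fun m2 _ => ?_
  simp only [Finsupp.coe_add, Pi.add_apply, Finsupp.single_eq_same, ne_eq, zero_ne_one,
    not_false_eq_true, Finsupp.single_eq_of_ne, add_zero, one_ne_zero, zero_add, C_mul]
  ring

theorem polyAct2_eq_sum_smul (w1 w2 : ℕ) (γ1 γ2 : SL2Z) (P : MvPolynomial (Fin 2) R) :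
    polyAct2 w1 w2 γ1 γ2 P =
      ∑ m1 ∈ Finset.range (w1 + 1), ∑ m2 ∈ Finset.range (w2 + 1),
        coeff (Finsupp.single 0 m1 + Finsupp.single 1 m2) P •
          (Polynomial.aeval (X 0) (polyAct1 w1 γ1 (Polynomial.X ^ m1 : Polynomial R)) *
            Polynomial.aeval (X 1) (polyAct1 w2 γ2 (Polynomial.X ^ m2 : Polynomial R))) := by
  refine Finset.sum_congr rfl fun m1 hm1 => Finset.sum_congr rfl fun m2 hm2 => ?_
  rw [Finset.mem_range, Nat.lt_succ_iff] at hm1 hm2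
  simp [polyAct1_X_pow, hm1, hm2, mfrac, actSubst, smul_eq_C_mul, mul_assoc]

theorem polyAct2_polyAct2 (w1 w2 : ℕ) (γ1 γ2 δ1 δ2 : SL2Z) (P : MvPolynomial (Fin 2) R) :
    polyAct2 w1 w2 γ1 γ2 (polyAct2 w1 w2 δ1 δ2 P) = polyAct2 w1 w2 (γ1 * δ1) (γ2 * δ2) P := by
  rw [polyAct2_eq_sum_smul w1 w2 δ1 δ2, ← polyAct2ₗ_apply, map_sum, polyAct2_eq_sum_smul]
  simp only [map_sum, map_smul, polyAct2ₗ_apply, polyAct2_aeval_X_zero_mul_aeval_X_one,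
    polyAct1_polyAct1]

theorem matU_mul_matS_val : (matU * matS).1 = !![1, 0; 1, 1] := by
  ext i j
  fin_cases i <;> fin_cases j <;> rfl

theorem matU_sq_val : (matU ^ 2).1 = !![-1, 1; -1, 0] := by
  ext i j
  fin_cases i <;> fin_cases j <;> rfl

theorem actSubst_one : actSubst (R := R) 1 = ![Polynomial.X, 1] := by
  ext i : 1
  fin_cases i <;> simp [actSubst]

theorem actSubst_S : actSubst (R := R) matS = ![1, -Polynomial.X] := by
  ext i : 1
  fin_cases i <;> simp [actSubst, matS]

theorem actSubst_U : actSubst (R := R) matU = ![Polynomial.X - 1, Polynomial.X] := by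
  ext i : 1
  fin_cases i <;> simp [actSubst, matU]

theorem actSubst_US : actSubst (R := R) (matU * matS) = ![Polynomial.X, 1 - Polynomial.X] := by
  rw [actSubst, matU_mul_matS_val]
  ext i : 1
  fin_cases i
  · simp
  · simp [sub_eq_neg_add]

theorem actSubst_U_sq : actSubst (R := R) (matU ^ 2) = ![-1, Polynomial.X - 1] := by
  rw [actSubst, matU_sq_val]
  ext i : 1
  fin_cases i
  · simp
  · simp [sub_eq_add_neg]

theorem polyAct1_one_left {w : ℕ} {Q : Polynomial R} (hQ : Q.natDegree ≤ w) :
    polyAct1 w 1 Q = Q := by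
  rw [polyAct1_eq_aeval_homogenize, actSubst_one, Polynomial.aeval_homogenize_X_one Q hQ]

end Action

theorem polyAct2_toX1 (w1 w2 : ℕ) (γ1 γ2 : SL2Z) (Q : Polynomial ℚ) :
    polyAct2 w1 w2 γ1 γ2 (toX1 Q) = toX1 (polyAct1 w1 γ1 Q) * toX2 (actSubst γ2 1 ^ w2) := by
  simpa [toX1, toX2, polyAct1_one_right] using
    polyAct2_aeval_X_zero_mul_aeval_X_one w1 w2 γ1 γ2 Q 1

theorem polyAct2_X_zero_pow_mul_toX2 (w1 w2 : ℕ) (γ1 γ2 : SL2Z) (Q : Polynomial ℚ) :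
    polyAct2 w1 w2 γ1 γ2 (X 0 ^ w1 * toX2 Q) =
      toX1 (actSubst γ1 0 ^ w1) * toX2 (polyAct1 w2 γ2 Q) := by
  simpa [toX1, toX2, polyAct1_X_pow_self] using
    polyAct2_aeval_X_zero_mul_aeval_X_one w1 w2 γ1 γ2 (Polynomial.X ^ w1) Q

theorem memV2_toX1_mul_toX2 {w1 w2 : ℕ} {f g : Polynomial ℚ} (hf : f.natDegree ≤ w1)
    (hg : g.natDegree ≤ w2) : MemV2 w1 w2 (toX1 f * toX2 g) := by
  have hsupp : ∀ u ∈ (toX1 f * toX2 g).support, u 0 ≤ w1 ∧ u 1 ≤ w2 := fun u hu => by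
    rw [mem_support_iff, toX1, toX2, coeff_aeval_X_zero_mul_aeval_X_one] at hu
    exact ⟨(Polynomial.le_natDegree_of_ne_zero (left_ne_zero_of_mul hu)).trans hf,
      (Polynomial.le_natDegree_of_ne_zero (right_ne_zero_of_mul hu)).trans hg⟩
  exact ⟨degreeOf_le_iff.2 fun u hu => (hsupp u hu).1, degreeOf_le_iff.2 fun u hu => (hsupp u hu).2⟩

theorem memV2_toX1 {w1 : ℕ} (w2 : ℕ) {Q : Polynomial ℚ} (hQ : Q.natDegree ≤ w1) :
    MemV2 w1 w2 (toX1 Q) := by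
  simpa [toX2] using
    memV2_toX1_mul_toX2 (w2 := w2) hQ (Polynomial.natDegree_one.trans_le (Nat.zero_le _))

theorem memV2_X_zero_pow_mul_toX2 (w1 : ℕ) {w2 : ℕ} {Q : Polynomial ℚ} (hQ : Q.natDegree ≤ w2) :
    MemV2 w1 w2 (X 0 ^ w1 * toX2 Q) := by
  simpa [toX1] using memV2_toX1_mul_toX2 (Polynomial.natDegree_X_pow_le w1) hQ

theorem MemV2.sub {w1 w2 : ℕ} {P Q : MvPolynomial (Fin 2) ℚ} (hP : MemV2 w1 w2 P)
    (hQ : MemV2 w1 w2 Q) : MemV2 w1 w2 (P - Q) :=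
  ⟨(degreeOf_sub_le _ _ _).trans (max_le hP.1 hQ.1),
    (degreeOf_sub_le _ _ _).trans (max_le hP.2 hQ.2)⟩

theorem MemW1.polyAct1_S {w : ℕ} {Q : Polynomial ℚ} (hQ : MemW1 w Q) :
    polyAct1 w matS Q = -Q :=
  eq_neg_of_add_eq_zero_right hQ.2.1

theorem MemW1.polyAct1_US {w : ℕ} {Q : Polynomial ℚ} (hQ : MemW1 w Q) :
    polyAct1 w (matU * matS) Q = -polyAct1 w matU Q := by
  rw [← polyAct1_polyAct1, hQ.polyAct1_S, polyAct1_neg]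

theorem MemW1.neg {w : ℕ} {Q : Polynomial ℚ} (hQ : MemW1 w Q) : MemW1 w (-Q) := by
  obtain ⟨hdeg, hS, hU⟩ := hQ
  refine ⟨(Polynomial.natDegree_neg Q).le.trans hdeg, ?_, ?_⟩
  · rw [polyAct1_neg]
    linear_combination -hS
  · rw [polyAct1_neg, polyAct1_neg]
    linear_combination -hU

theorem polyAct2_S_S_toX1 {w1 w2 : ℕ} (hw2 : Even w2) {Q : Polynomial ℚ} (hQ : MemW1 w1 Q) :
    polyAct2 w1 w2 matS matS (toX1 Q) = -(toX1 Q * X 1 ^ w2) := by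
  rw [polyAct2_toX1, hQ.polyAct1_S]
  simp [actSubst_S, toX1, toX2, hw2.neg_pow]

theorem polyAct2_S_S_X_zero_pow_mul_toX2 {w1 w2 : ℕ} {Q : Polynomial ℚ} (hQ : MemW1 w2 Q) :
    polyAct2 w1 w2 matS matS (X 0 ^ w1 * toX2 Q) = -toX2 Q := by
  rw [polyAct2_X_zero_pow_mul_toX2, hQ.polyAct1_S]
  simp [actSubst_S, toX1, toX2]

noncomputable def maninR2 (w1 w2 : ℕ) (P : MvPolynomial (Fin 2) ℚ) : MvPolynomial (Fin 2) ℚ :=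
  polyAct2 w1 w2 matS matS P + polyAct2 w1 w2 matS (matU * matS) P +
    polyAct2 w1 w2 (matU * matS) (matU * matS) P + polyAct2 w1 w2 1 matU P -
    polyAct2 w1 w2 (matU ^ 2) (matU ^ 2) P

theorem MemW2.maninR2_eq_zero {w1 w2 : ℕ} {P : MvPolynomial (Fin 2) ℚ} (hP : MemW2 w1 w2 P) :
    maninR2 w1 w2 P = 0 :=
  hP.2.2.1

theorem maninR2_sub (w1 w2 : ℕ) (P Q : MvPolynomial (Fin 2) ℚ) :
    maninR2 w1 w2 (P - Q) = maninR2 w1 w2 P - maninR2 w1 w2 Q := by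
  simp only [maninR2, polyAct2_sub]
  ring

theorem maninR2_toX1 {w1 w2 : ℕ} (hw2 : Even w2) {Q : Polynomial ℚ} (hQ : MemW1 w1 Q) :
    maninR2 w1 w2 (toX1 Q) = 0 := by
  have hsum := congrArg toX1 hQ.2.2
  simp only [toX1, map_add, map_zero] at hsum
  have hflip : (X 1 - 1 : MvPolynomial (Fin 2) ℚ) ^ w2 = (1 - X 1) ^ w2 := by
    rw [← neg_sub, hw2.neg_pow]
  simp only [maninR2, polyAct2_toX1]
  simp only [toX1, toX2, hQ.polyAct1_S, hQ.polyAct1_US, polyAct1_one_left hQ.1, actSubst_S,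
    actSubst_US, actSubst_U, actSubst_U_sq, Matrix.cons_val_one, Matrix.cons_val_fin_one, map_pow,
    map_one, Polynomial.aeval_neg, Polynomial.aeval_sub, Polynomial.aeval_X, hw2.neg_pow, hflip]
  linear_combination (-(1 - X 1 : MvPolynomial (Fin 2) ℚ) ^ w2) * hsum

theorem maninR2_X_zero_pow_mul_toX2 {w1 w2 : ℕ} (hw1 : Even w1) {Q : Polynomial ℚ}
    (hQ : MemW1 w2 Q) : maninR2 w1 w2 (X 0 ^ w1 * toX2 Q) = 0 := by
  have hsum := congrArg toX2 hQ.2.2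
  simp only [toX2, map_add, map_zero] at hsum
  simp only [maninR2, polyAct2_X_zero_pow_mul_toX2]
  simp only [toX1, toX2, hQ.polyAct1_S, hQ.polyAct1_US, actSubst_S, actSubst_US, actSubst_one,
    actSubst_U_sq, Matrix.cons_val_zero, map_pow, map_one, one_pow, one_mul, Polynomial.aeval_neg,
    Polynomial.aeval_X, hw1.neg_pow]
  linear_combination -hsum

theorem maninR2_of_polyAct2_S_S {w1 w2 : ℕ} {P : MvPolynomial (Fin 2) ℚ}
    (hP : polyAct2 w1 w2 matS matS P = -P) :
    maninR2 w1 w2 P =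
      -(P + polyAct2 w1 w2 matU matU P + polyAct2 w1 w2 (matU ^ 2) (matU ^ 2) P) := by
  have hSUS : polyAct2 w1 w2 matS (matU * matS) P = -polyAct2 w1 w2 1 matU P := by
    rw [← one_mul matS, ← polyAct2_polyAct2, one_mul, hP, polyAct2_neg]
  have hUSUS : polyAct2 w1 w2 (matU * matS) (matU * matS) P = -polyAct2 w1 w2 matU matU P := by
    rw [← polyAct2_polyAct2, hP, polyAct2_neg]
  rw [maninR2, hP, hSUS, hUSUS]
  ring
theorem kernel_of_PhiS_eq_E_general (w1 w2 : ℕ) (hw1 : Even w1) (hw2 : Even w2)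
    (P : MvPolynomial (Fin 2) ℚ) (hP : MemW2 w1 w2 P) :
    (∃ P1 P2 : Polynomial ℚ, MemW1 w1 P1 ∧ MemW1 w2 P2 ∧
        P + polyAct2 w1 w2 matS matS P =
          toX1 P1 * (1 - MvPolynomial.X 1 ^ w2) + (1 - MvPolynomial.X 0 ^ w1) * toX2 P2) ↔
      MemE w1 w2 P := by
  have htoX2_neg (Q : Polynomial ℚ) : toX2 (-Q) = -toX2 Q := map_neg _ Q
  constructor
  · rintro ⟨P1, P2, hP1, hP2, hnorm⟩
    set d := P - toX1 P1 - X 0 ^ w1 * toX2 (-P2)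
    have hd_S : polyAct2 w1 w2 matS matS d = -d := by
      rw [polyAct2_sub, polyAct2_sub, polyAct2_S_S_toX1 hw2 hP1,
        polyAct2_S_S_X_zero_pow_mul_toX2 hP2.neg, htoX2_neg]
      linear_combination hnorm - X 0 ^ w1 * htoX2_neg P2
    have hd_U : d + polyAct2 w1 w2 matU matU d + polyAct2 w1 w2 (matU ^ 2) (matU ^ 2) d = 0 := by
      have hR2 := maninR2_of_polyAct2_S_S hd_S
      rw [maninR2_sub, maninR2_sub, hP.maninR2_eq_zero, maninR2_toX1 hw2 hP1,
        maninR2_X_zero_pow_mul_toX2 hw1 hP2.neg] at hR2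
      linear_combination hR2
    refine ⟨toX1 P1, d, X 0 ^ w1 * toX2 (-P2), ⟨P1, hP1, rfl⟩, ⟨?_, ?_, hd_U⟩,
      ⟨-P2, hP2.neg, rfl⟩, by ring⟩
    · exact (hP.1.sub (memV2_toX1 w2 hP1.1)).sub (memV2_X_zero_pow_mul_toX2 w1 hP2.neg.1)
    · linear_combination hd_S
  · rintro ⟨-, d, -, ⟨P1, hP1, rfl⟩, hd, ⟨P2, hP2, rfl⟩, rfl⟩
    refine ⟨P1, -P2, hP1, hP2.neg, ?_⟩
    rw [polyAct2_add, polyAct2_add, polyAct2_S_S_toX1 hw2 hP1,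
      polyAct2_S_S_X_zero_pow_mul_toX2 hP2, htoX2_neg]
    linear_combination hd.2.1

/-- For `P ∈ W_{w1,w2}^ℚ`, the polynomial `((1,1)+(S,S))·P` lies in
`W_{w1}^ℚ⊗E_{w2}^ℚ + E_{w1}^ℚ⊗W_{w2}^ℚ` iff `P ∈ E_{w1,w2}^ℚ` : the kernel of
`Φ_S : W_{w1,w2}^ℚ → (W_{w1}^ℚ/E_{w1}^ℚ) ⊗ (W_{w2}^ℚ/E_{w2}^ℚ)` equals `E_{w1,w2}^ℚ`. -/
theorem kernel_of_PhiS_eq_E (w1 w2 : ℕ) (hw1 : Even w1) (hw2 : Even w2)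
    (hw1' : 2 ≤ w1) (hw2' : 2 ≤ w2) (P : MvPolynomial (Fin 2) ℚ) (hP : MemW2 w1 w2 P) :
    (∃ P1 P2 : Polynomial ℚ, MemW1 w1 P1 ∧ MemW1 w2 P2 ∧
        P + polyAct2 w1 w2 matS matS P =
          toX1 P1 * (1 - MvPolynomial.X 1 ^ w2) + (1 - MvPolynomial.X 0 ^ w1) * toX2 P2) ↔
      MemE w1 w2 P :=
  kernel_of_PhiS_eq_E_general w1 w2 hw1 hw2 P hP
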